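/- arXiv:2508.00756 — 5 statements merged into one kernel-verified Lean document; each statement's English description precedes it below -/
import Mathlib

section
/- Let η > 0 and let μ, μ_k be vectors in ℝ^m (EuclideanSpace ℝ (Fin m)) with ‖μ_k‖ ≥ (‖μ‖ + √(‖μ‖² + η(2+η))) / (2+η). Then (1 − ‖μ‖²) + ‖μ − μ_k‖² ≥ (1+η)(1 − ‖μ_k‖²); equivalently, writing tr(Σ) = 1 − ‖μ‖² and tr(Σ_k) = 1 − ‖μ_k‖², one has tr(Σ) + ‖μ − μ_k‖² ≥ (1+η)·tr(Σ_k). -/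
/-!
The reverse triangle inequality gives `‖μ - μk‖² ≥ (‖μ‖ - ‖μk‖)²`, which reduces the claim to
`η ≤ (2 + η)‖μk‖² - 2‖μ‖‖μk‖`. The threshold on `‖μk‖` is exactly the larger root of this
quadratic in `‖μk‖`, so the inequality holds beyond it.
-/

lemma le_quadratic_of_larger_root_le {a b c x : ℝ} (ha : 0 < a)
    (hx : (b + √(b ^ 2 + c * a)) / a ≤ x) : c ≤ a * x ^ 2 - 2 * b * x := by
  have hroot : √(b ^ 2 + c * a) ≤ a * x - b := by
    rw [div_le_iff₀ ha] at hx
    linarith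
  have hsq : b ^ 2 + c * a ≤ (a * x - b) ^ 2 :=
    (Real.sqrt_le_left (Real.sqrt_nonneg _ |>.trans hroot)).mp hroot
  have hscaled : c * a ≤ (a * x ^ 2 - 2 * b * x) * a := by linear_combination hsq
  exact le_of_mul_le_mul_right hscaled ha

/-- For `η > 0` and vectors `μ, μ_k` in `ℝ^m` with
`‖μ_k‖ ≥ (‖μ‖ + √(‖μ‖² + η(2+η))) / (2+η)`, one has
`(1 - ‖μ‖²) + ‖μ - μ_k‖² ≥ (1+η)(1 - ‖μ_k‖²)`. -/
theorem stmt_7 (m : ℕ) (η : ℝ) (hη : 0 < η) (μ μk : EuclideanSpace ℝ (Fin m))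
    (h : (‖μ‖ + Real.sqrt (‖μ‖ ^ 2 + η * (2 + η))) / (2 + η) ≤ ‖μk‖) :
    (1 + η) * (1 - ‖μk‖ ^ 2) ≤ (1 - ‖μ‖ ^ 2) + ‖μ - μk‖ ^ 2 := by
  have hquad : η ≤ (2 + η) * ‖μk‖ ^ 2 - 2 * ‖μ‖ * ‖μk‖ :=
    le_quadratic_of_larger_root_le (by linarith) h
  have hrev : (‖μ‖ - ‖μk‖) ^ 2 ≤ ‖μ - μk‖ ^ 2 :=
    sq_le_sq.mpr (by simpa only [abs_norm] using abs_norm_sub_norm_le μ μk)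
  linear_combination hquad + hrev
end

section
/- Let K be a positive natural number, let π_1, …, π_K be nonnegative reals summing to 1, and let a_1, …, a_K and b_1, …, b_K be nonnegative reals. Set S = Σ_k π_k (a_k + b_k) and assume S > 0. Then Σ_k π_k · (2 a_k) / (a_k + b_k + S) ≤ 1. -/
/-- Jensen step: for nonnegative weights `π_k` summing to `1` and
nonnegative reals `a_k, b_k`, with `S = Σ_k π_k (a_k + b_k) > 0`, one has
`Σ_k π_k · 2a_k / (a_k + b_k + S) ≤ 1`. -/
theorem stmt_8 (K : ℕ) (hK : 0 < K)
    (π' a b : Fin K → ℝ)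
    (hπ : ∀ k, 0 ≤ π' k) (hsum : ∑ k, π' k = 1)
    (ha : ∀ k, 0 ≤ a k) (hb : ∀ k, 0 ≤ b k)
    (S : ℝ) (hS : S = ∑ k, π' k * (a k + b k)) (hSpos : 0 < S) :
    ∑ k, π' k * (2 * a k) / (a k + b k + S) ≤ 1 := by
  have h1 : ∑ k, π' k * (2 * a k) / (a k + b k + S)
      ≤ ∑ k, π' k * (a k + b k + S) / (2 * S) := by
    apply Finset.sum_le_sum
    intro k _
    have ht : 0 < a k + b k + S := by have := ha k; have := hb k; linarith
    rw [div_le_div_iff₀ ht (by linarith)]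
    nlinarith [mul_nonneg (hπ k) (sq_nonneg (a k + b k - S)),
      mul_nonneg (mul_nonneg (hπ k) (hb k)) hSpos.le, hπ k, ha k, hb k]
  refine h1.trans ?_
  have h2 : ∑ k, π' k * (a k + b k + S) = 2 * S := by
    have : ∀ k : Fin K, π' k * (a k + b k + S)
        = π' k * (a k + b k) + π' k * S := by intro k; ring
    rw [Finset.sum_congr rfl fun k _ => this k, Finset.sum_add_distrib,
      ← Finset.sum_mul, hsum, ← hS]; ring
  rw [← Finset.sum_div, h2, div_self (by linarith)]
end

section
/- Let η > 0 and define the real sequence (a_n)_{n ≥ 0} by a_0 = √(η/(2+η)) and a_{n+1} = (a_n + √(a_n² + η(2+η))) / (2+η). Then: (i) a_n < 1 for every n; (ii) the sequence is strictly increasing; and (iii) a_n converges to 1 as n → ∞. -/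
open Filter

/-- For `η > 0`, the sequence defined by `a 0 = √(η/(2+η))` and
`a (n+1) = (a n + √((a n)² + η(2+η))) / (2+η)` satisfies: every term is `< 1`, it is
strictly increasing, and it converges to `1`. -/
theorem stmt_9 (η : ℝ) (hη : 0 < η) (a : ℕ → ℝ)
    (h0 : a 0 = Real.sqrt (η / (2 + η)))
    (hrec : ∀ n, a (n + 1) = (a n + Real.sqrt ((a n) ^ 2 + η * (2 + η))) / (2 + η)) :
    (∀ n, a n < 1) ∧ StrictMono a ∧ Tendsto a atTop (nhds 1) := by
  have hc : (0:ℝ) < 2 + η := by linarith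
  -- every term is nonneg and < 1
  have key : ∀ n, 0 ≤ a n ∧ a n < 1 := by
    intro n
    induction n with
    | zero =>
      constructor
      · rw [h0]; exact Real.sqrt_nonneg _
      · rw [h0]
        have h1 : η / (2 + η) < 1 := by
          rw [div_lt_one hc]; linarith
        have := Real.sqrt_lt_sqrt (by positivity) h1
        simpa using this
    | succ n ih =>
      obtain ⟨h1, h2⟩ := ih
      have hs : 0 ≤ Real.sqrt ((a n) ^ 2 + η * (2 + η)) := Real.sqrt_nonneg _
      constructor
      · rw [hrec n]; positivity
      · rw [hrec n, div_lt_one hc]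
        have hlt : Real.sqrt ((a n) ^ 2 + η * (2 + η)) < (2 + η) - a n := by
          rw [show (2 + η) - a n = 2 + η - a n by ring,
            Real.sqrt_lt' (by linarith)]
          nlinarith
        linarith
  have hlt1 : ∀ n, a n < 1 := fun n => (key n).2
  have hmono : StrictMono a := by
    apply strictMono_nat_of_lt_succ
    intro n
    obtain ⟨h1, h2⟩ := key n
    rw [hrec n, lt_div_iff₀ hc]
    have hlt : a n * (1 + η) < Real.sqrt ((a n) ^ 2 + η * (2 + η)) := by
      rw [show a n * (1 + η) = a n * (1+η) by ring]
      have ha2 : (a n) ^ 2 < 1 := by nlinarith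
      have h3 : (a n * (1 + η)) ^ 2 < (a n) ^ 2 + η * (2 + η) := by
        nlinarith [mul_pos hη hc, ha2]
      calc a n * (1 + η) ≤ |a n * (1 + η)| := le_abs_self _
        _ = Real.sqrt ((a n * (1 + η)) ^ 2) := (Real.sqrt_sq_eq_abs _).symm
        _ < Real.sqrt ((a n) ^ 2 + η * (2 + η)) :=
            Real.sqrt_lt_sqrt (sq_nonneg _) h3
    nlinarith
  refine ⟨hlt1, hmono, ?_⟩
  -- convergence
  have hbdd : BddAbove (Set.range a) := ⟨1, by rintro x ⟨n, rfl⟩; exact (hlt1 n).le⟩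
  set L := ⨆ n, a n with hL
  have htend : Tendsto a atTop (nhds L) :=
    tendsto_atTop_ciSup hmono.monotone hbdd
  have hL0 : a 0 ≤ L := le_ciSup hbdd 0
  have ha0 : 0 < a 0 := by
    rw [h0]; exact Real.sqrt_pos.mpr (by positivity)
  have hLpos : 0 < L := lt_of_lt_of_le ha0 hL0
  have hLle : L ≤ 1 := ciSup_le fun n => (hlt1 n).le
  -- fixed point equation
  have htend2 : Tendsto (fun n => a (n + 1)) atTop (nhds L) :=
    htend.comp (tendsto_add_atTop_nat 1)
  have htend3 : Tendsto (fun n => (a n + Real.sqrt ((a n) ^ 2 + η * (2 + η))) / (2 + η))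
      atTop (nhds ((L + Real.sqrt (L ^ 2 + η * (2 + η))) / (2 + η))) := by
    apply Tendsto.div_const
    apply htend.add
    exact (Real.continuous_sqrt.tendsto _).comp
      (((htend.pow 2).add tendsto_const_nhds))
  have hfix : L = (L + Real.sqrt (L ^ 2 + η * (2 + η))) / (2 + η) := by
    apply tendsto_nhds_unique htend2
    simpa only [hrec] using htend3
  have hsq : Real.sqrt (L ^ 2 + η * (2 + η)) = L * (1 + η) := by
    have := hfix
    rw [eq_div_iff (ne_of_gt hc)] at this
    linarith
  have hsq2 : L ^ 2 + η * (2 + η) = (L * (1 + η)) ^ 2 := by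
    rw [← hsq, Real.sq_sqrt (by positivity)]
  have hL2 : L ^ 2 = 1 := by
    have hpos : 0 < η * (2 + η) := by positivity
    nlinarith
  have hL1 : L = 1 := by nlinarith
  rwa [hL1] at htend
end

section
/- Let η > 0, let n be a positive natural number, and let μ_0, μ_1, …, μ_n be vectors in ℝ^m (EuclideanSpace ℝ (Fin m)) such that ‖μ_j‖ ≤ 1 for all j, ‖μ_j‖ < 1 for all j < n, and for each j < n the threshold condition ‖μ_{j+1}‖ ≥ (‖μ_j‖ + √(‖μ_j‖² + η(2+η))) / (2+η) holds. Then each denominator (1 − ‖μ_{j+1}‖²) + (1 − ‖μ_j‖²) + ‖μ_j − μ_{j+1}‖² is strictly positive and the product Π_{j=0}^{n−1} [ 2(1 − ‖μ_{j+1}‖²) / ((1 − ‖μ_{j+1}‖²) + (1 − ‖μ_j‖²) + ‖μ_j − μ_{j+1}‖²) ] ≤ (2/(2+η))^n. -/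
/-- For `η > 0` and vectors `μ_0, …, μ_n` in `ℝ^m` with `‖μ_j‖ ≤ 1`
for all `j ≤ n`, `‖μ_j‖ < 1` for `j < n`, and the threshold condition
`‖μ_{j+1}‖ ≥ (‖μ_j‖ + √(‖μ_j‖² + η(2+η)))/(2+η)` for all `j < n`, every denominator
`(1 - ‖μ_{j+1}‖²) + (1 - ‖μ_j‖²) + ‖μ_j - μ_{j+1}‖²` is strictly positive and the product
of the single-step memorization ratios is at most `(2/(2+η))^n`. -/
theorem stmt_10 (m : ℕ) (η : ℝ) (hη : 0 < η) (n : ℕ) (hn : 0 < n)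
    (μ : ℕ → EuclideanSpace ℝ (Fin m))
    (hle : ∀ j ≤ n, ‖μ j‖ ≤ 1) (hlt : ∀ j < n, ‖μ j‖ < 1)
    (hstep : ∀ j < n,
      (‖μ j‖ + Real.sqrt (‖μ j‖ ^ 2 + η * (2 + η))) / (2 + η) ≤ ‖μ (j + 1)‖) :
    (∀ j < n, 0 < (1 - ‖μ (j + 1)‖ ^ 2) + (1 - ‖μ j‖ ^ 2) + ‖μ j - μ (j + 1)‖ ^ 2) ∧
    ∏ j ∈ Finset.range n,
        (2 * (1 - ‖μ (j + 1)‖ ^ 2) /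
          ((1 - ‖μ (j + 1)‖ ^ 2) + (1 - ‖μ j‖ ^ 2) + ‖μ j - μ (j + 1)‖ ^ 2)) ≤
      (2 / (2 + η)) ^ n := by
  have h2η : (0:ℝ) < 2 + η := by linarith
  have hden : ∀ j < n, 0 < (1 - ‖μ (j + 1)‖ ^ 2) + (1 - ‖μ j‖ ^ 2) + ‖μ j - μ (j + 1)‖ ^ 2 := by
    intro j hj
    have h1 : ‖μ j‖ < 1 := hlt j hj
    have h2 : ‖μ (j + 1)‖ ≤ 1 := hle (j + 1) hj
    have h3 : (0:ℝ) ≤ ‖μ j‖ := norm_nonneg _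
    have h4 : (0:ℝ) ≤ ‖μ j - μ (j + 1)‖ := norm_nonneg _
    have h5 : (0:ℝ) ≤ ‖μ (j + 1)‖ := norm_nonneg _
    nlinarith
  refine ⟨hden, ?_⟩
  calc ∏ j ∈ Finset.range n,
        (2 * (1 - ‖μ (j + 1)‖ ^ 2) /
          ((1 - ‖μ (j + 1)‖ ^ 2) + (1 - ‖μ j‖ ^ 2) + ‖μ j - μ (j + 1)‖ ^ 2))
      ≤ ∏ j ∈ Finset.range n, (2 / (2 + η)) := by
        apply Finset.prod_le_prod
        · intro j hj
          have hj' := Finset.mem_range.mp hj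
          exact div_nonneg (by nlinarith [hle (j+1) hj', norm_nonneg (μ (j+1))])
            (le_of_lt (hden j hj'))
        · intro j hj
          have hj' := Finset.mem_range.mp hj
          set a := ‖μ j‖ with ha
          set b := ‖μ (j+1)‖ with hb
          set d := ‖μ j - μ (j+1)‖ with hd
          have hD := hden j hj'
          rw [div_le_div_iff₀ hD h2η]
          -- key: (2+η) * b^2 - 2*a*b - η ≥ 0
          set s := Real.sqrt (a ^ 2 + η * (2 + η)) with hs
          have hs2 : s ^ 2 = a ^ 2 + η * (2 + η) := Real.sq_sqrt (by positivity)
          have hsa : a ≤ s := by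
            have := Real.sqrt_le_sqrt (show a ^ 2 ≤ a ^ 2 + η * (2 + η) by nlinarith)
            rwa [Real.sqrt_sq (norm_nonneg _)] at this
          have hbge : a + s ≤ (2 + η) * b := by
            have := hstep j hj'
            rw [div_le_iff₀ h2η] at this
            linarith [this]
          have ha0 : (0:ℝ) ≤ a := norm_nonneg _
          have hquad : 0 ≤ (2 + η) * b ^ 2 - 2 * a * b - η := by
            have h1 : 0 ≤ (2 + η) * b - (a + s) := by linarith
            have h2 : 0 ≤ (2 + η) * b - (a - s) := by nlinarith
            nlinarith [mul_nonneg h1 h2]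
          -- triangle inequality: d ≥ |a - b|
          have htri : b - a ≤ d := by
            have := norm_sub_norm_le (μ (j+1)) (μ j)
            rw [norm_sub_rev] at this
            simpa using this
          have htri' : a - b ≤ d := by
            have := norm_sub_norm_le (μ j) (μ (j+1))
            simpa using this
          have hd0 : (0:ℝ) ≤ d := norm_nonneg _
          have hdsq : (a - b) ^ 2 ≤ d ^ 2 := by nlinarith
          nlinarith
    _ = (2 / (2 + η)) ^ n := by rw [Finset.prod_const, Finset.card_range]
end

section
/- Let q and q' be probability measures on ℝ^m (EuclideanSpace ℝ (Fin m)), each absolutely continuous with respect to Lebesgue measure with densities f and f' satisfying ∫ f |log f| < ∞ and ∫ f' |log f'| < ∞, and each with finite second moment. Let z_1, …, z_n be points of ℝ^m, and assume Σ_{i=1}^n ∫ ‖z − z_i‖² dq'(z) > 0. Then lim_{ε → 0⁺} [ Σ_{i=1}^n KL(q ‖ N(z_i, εI)) ] / [ Σ_{i=1}^n KL(q' ‖ N(z_i, εI)) ] = [ Σ_{i=1}^n ∫ ‖z − z_i‖² dq(z) ] / [ Σ_{i=1}^n ∫ ‖z − z_i‖² dq'(z) ], where the Kullback–Leibler divergences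 are taken as real numbers (they are finite for all sufficiently small ε > 0). -/
/-!
With Lebesgue densities on both sides, `log (dq / dN(a, εI)) = log f + (m/2) log (2πε) +
‖x - a‖² / (2ε)`, so each summed divergence has the form `C + c log ε + S / (2ε)`, where `S` is
the summed expected squared distance. After multiplication by `2ε` the first two terms vanish as
`ε → 0⁺` (because `ε log ε → 0`), which leaves `S`; the ratio therefore tends to `S / S'`.
-/

open MeasureTheory ProbabilityTheory Filter

/-- The Gaussian measure `N(a, vI)` on `ℝ^m`: the product of one-dimensional Gaussians
with means `a i` and common variance `v`, transported to `EuclideanSpace ℝ (Fin m)`. -/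
noncomputable def gaussianE {m : ℕ} (a : EuclideanSpace ℝ (Fin m)) (v : NNReal) :
    Measure (EuclideanSpace ℝ (Fin m)) :=
  Measure.map (MeasurableEquiv.toLp 2 (Fin m → ℝ))
    (Measure.pi fun i => gaussianReal (a i) v)

/-- The Kullback–Leibler divergence `∫ log (dp/dq) dp`, as a real number. -/
noncomputable def klReal {α : Type*} [MeasurableSpace α] (p q : Measure α) : ℝ :=
  ∫ z, Real.log (p.rnDeriv q z).toReal ∂p

open Real
open scoped ENNReal NNReal

theorem MeasurableEquiv.map_withDensity_comp {α β : Type*} [MeasurableSpace α] [MeasurableSpace β]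
    (e : α ≃ᵐ β) (μ : Measure α) {g : β → ℝ≥0∞} (hg : Measurable g) :
    (μ.withDensity (g ∘ e)).map e = (μ.map e).withDensity g := by
  ext s hs
  rw [Measure.map_apply e.measurable hs, withDensity_apply _ hs,
    withDensity_apply _ (e.measurable hs), setLIntegral_map hs hg e.measurable, Function.comp_def]

theorem Measure.pi_fin_withDensity {n : ℕ} {α : Fin n → Type*} [∀ i, MeasurableSpace (α i)]
    (μ : ∀ i, Measure (α i)) [∀ i, SigmaFinite (μ i)] {g : ∀ i, α i → ℝ≥0∞}
    (hg : ∀ i, Measurable (g i)) (hg_top : ∀ i x, g i x ≠ ∞) :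
    Measure.pi (fun i => (μ i).withDensity (g i))
      = (Measure.pi μ).withDensity (fun x => ∏ i, g i (x i)) := by
  induction n with
  | zero =>
    rw [Measure.pi_of_empty, Measure.pi_of_empty μ]
    exact withDensity_one.symm
  | succ n ih =>
    have : ∀ i, SigmaFinite ((μ i).withDensity (g i)) := fun i =>
      SigmaFinite.withDensity_of_ne_top (ae_of_all _ (hg_top i))
    have hprod : Measurable fun x : (∀ j : Fin n, α (Fin.succAbove 0 j)) =>
        ∏ j, g (Fin.succAbove 0 j) (x j) :=
      Finset.measurable_prod _ fun j _ => (hg _).comp (measurable_pi_apply j)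
    have hmeas : Measurable fun x : (∀ i, α i) => ∏ i, g i (x i) :=
      Finset.measurable_prod _ fun i _ => (hg i).comp (measurable_pi_apply i)
    have hsplit : (fun p : α 0 × (∀ j : Fin n, α (Fin.succAbove 0 j)) =>
          g 0 p.1 * ∏ j, g (Fin.succAbove 0 j) (p.2 j))
        = (fun x => ∏ i, g i (x i)) ∘ (MeasurableEquiv.piFinSuccAbove α 0).symm := by
      ext p
      simp only [Function.comp_apply, Fin.prod_univ_succAbove _ 0]
      rfl
    rw [← (measurePreserving_piFinSuccAbove (fun i => (μ i).withDensity (g i)) 0).symm.map_eq,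
      ← (measurePreserving_piFinSuccAbove μ 0).symm.map_eq,
      ih (fun j => μ (Fin.succAbove 0 j)) (fun j => hg _) (fun j => hg_top _),
      prod_withDensity (hg 0) hprod, hsplit,
      MeasurableEquiv.map_withDensity_comp _ _ hmeas]

theorem prod_gaussianPDFReal {m : ℕ} (a x : EuclideanSpace ℝ (Fin m)) (v : ℝ≥0) :
    ∏ i, gaussianPDFReal (a i) v (x i) = (√(2 * π * v))⁻¹ ^ m * exp (-‖x - a‖ ^ 2 / (2 * v)) := by
  simp only [gaussianPDFReal, Finset.prod_mul_distrib, Finset.prod_const, Finset.card_univ,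
    Fintype.card_fin, ← exp_sum, EuclideanSpace.norm_sq_eq, ← Finset.sum_div,
    ← Finset.sum_neg_distrib, PiLp.sub_apply, Real.norm_eq_abs, sq_abs]

theorem gaussianE_eq_withDensity {m : ℕ} (a : EuclideanSpace ℝ (Fin m)) {v : ℝ≥0} (hv : v ≠ 0) :
    gaussianE a v = volume.withDensity fun x =>
      ENNReal.ofReal ((√(2 * π * v))⁻¹ ^ m * exp (-‖x - a‖ ^ 2 / (2 * v))) := by
  have hmeas : Measurable fun x : EuclideanSpace ℝ (Fin m) =>
      ENNReal.ofReal ((√(2 * π * v))⁻¹ ^ m * exp (-‖x - a‖ ^ 2 / (2 * v))) :=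
    (by fun_prop : Continuous _).measurable.ennreal_ofReal
  have hdens : (fun y : Fin m → ℝ => ∏ i, gaussianPDF (a i) v (y i)) = (fun x =>
      ENNReal.ofReal ((√(2 * π * v))⁻¹ ^ m * exp (-‖x - a‖ ^ 2 / (2 * v))))
        ∘ MeasurableEquiv.toLp 2 (Fin m → ℝ) := by
    ext y
    rw [Function.comp_apply, ← prod_gaussianPDFReal,
      ENNReal.ofReal_prod_of_nonneg fun i _ => gaussianPDFReal_nonneg _ _ _]
    rfl
  simp_rw [gaussianE, gaussianReal_of_var_ne_zero _ hv]
  rw [Measure.pi_fin_withDensity _ (fun i => measurable_gaussianPDF _ _)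
    (fun i x => ENNReal.ofReal_ne_top), hdens, MeasurableEquiv.map_withDensity_comp _ _ hmeas,
    ← volume_pi, MeasurableEquiv.coe_toLp, (PiLp.volume_preserving_toLp (Fin m)).map_eq]

theorem integrable_norm_sub_sq {E : Type*} [NormedAddCommGroup E] [MeasurableSpace E]
    [OpensMeasurableSpace E] {μ : Measure E} [IsFiniteMeasure μ]
    (h : Integrable (fun x => ‖x‖ ^ 2) μ) (a : E) :
    Integrable (fun x => ‖x - a‖ ^ 2) μ := by
  refine ((h.const_mul 2).add (integrable_const (2 * ‖a‖ ^ 2))).mono'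
    (by fun_prop : Continuous fun x => ‖x - a‖ ^ 2).aestronglyMeasurable (ae_of_all _ fun x => ?_)
  calc ‖‖x - a‖ ^ 2‖ = ‖x - a‖ ^ 2 := by simp
    _ ≤ (‖x‖ + ‖a‖) ^ 2 := by gcongr; exact norm_sub_le x a
    _ ≤ 2 * ‖x‖ ^ 2 + 2 * ‖a‖ ^ 2 := by nlinarith [add_sq_le (a := ‖x‖) (b := ‖a‖)]

section withDensity

variable {α : Type*} [MeasurableSpace α] {μ : Measure α} {f g : α → ℝ}

theorem integrable_log_withDensity_ofReal (hf : Measurable f) (hf0 : ∀ᵐ x ∂μ, 0 ≤ f x)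
    (hent : Integrable (fun x => f x * |log (f x)|) μ) :
    Integrable (fun x => log (f x)) (μ.withDensity fun x => ENNReal.ofReal (f x)) := by
  rw [integrable_withDensity_iff hf.ennreal_ofReal (ae_of_all _ fun _ => ENNReal.ofReal_lt_top)]
  refine hent.mono'
    ((measurable_log.comp hf).mul hf.ennreal_ofReal.ennreal_toReal).aestronglyMeasurable ?_
  filter_upwards [hf0] with x hx
  rw [ENNReal.toReal_ofReal hx, norm_mul, Real.norm_eq_abs, Real.norm_eq_abs, abs_of_nonneg hx,
    mul_comm]

theorem klReal_withDensity_ofReal [SigmaFinite μ] (hf : Measurable f) (hg : Measurable g)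
    (hg_pos : ∀ᵐ x ∂μ, 0 < g x) :
    klReal (μ.withDensity fun x => ENNReal.ofReal (f x))
        (μ.withDensity fun x => ENNReal.ofReal (g x))
      = ∫ x, (log (f x) - log (g x)) ∂(μ.withDensity fun x => ENNReal.ofReal (f x)) := by
  set q := μ.withDensity fun x => ENNReal.ofReal (f x)
  have hrn : q.rnDeriv (μ.withDensity fun x => ENNReal.ofReal (g x))
      =ᵐ[μ] fun x => (ENNReal.ofReal (g x))⁻¹ * ENNReal.ofReal (f x) := by
    filter_upwards [Measure.rnDeriv_withDensity_right q μ hg.ennreal_ofReal.aemeasurable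
      (by filter_upwards [hg_pos] with x hx using (ENNReal.ofReal_pos.2 hx).ne')
      (ae_of_all _ fun _ => ENNReal.ofReal_ne_top),
      Measure.rnDeriv_withDensity μ hf.ennreal_ofReal] with x h₁ h₂
    rw [h₁, h₂]
  have hf_pos : ∀ᵐ x ∂q, 0 < f x :=
    (ae_withDensity_iff hf.ennreal_ofReal).2 (ae_of_all _ fun x hx =>
      ENNReal.ofReal_pos.1 (pos_iff_ne_zero.2 hx))
  have hqμ : q ≪ μ := withDensity_absolutelyContinuous _ _
  refine integral_congr_ae ?_
  filter_upwards [hqμ.ae_le hrn, hqμ.ae_le hg_pos, hf_pos] with x hrnx hgx hfx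
  rw [hrnx, ENNReal.toReal_mul, ENNReal.toReal_inv, ENNReal.toReal_ofReal hgx.le,
    ENNReal.toReal_ofReal hfx.le, log_mul (inv_ne_zero hgx.ne') hfx.ne', log_inv]
  ring

end withDensity

theorem log_gaussianDensity {m : ℕ} (a x : EuclideanSpace ℝ (Fin m)) {ε : ℝ} (hε : 0 < ε) :
    log ((√(2 * π * ε))⁻¹ ^ m * exp (-‖x - a‖ ^ 2 / (2 * ε)))
      = -(m / 2 * log (2 * π * ε)) - ‖x - a‖ ^ 2 / (2 * ε) := by
  have hsqrt : 0 < √(2 * π * ε) := sqrt_pos.2 (by positivity)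
  rw [log_mul (by positivity) (exp_ne_zero _), log_exp, log_pow, log_inv,
    log_sqrt (by positivity)]
  ring

theorem klReal_gaussianE {m : ℕ} {q : Measure (EuclideanSpace ℝ (Fin m))}
    [IsProbabilityMeasure q] {f : EuclideanSpace ℝ (Fin m) → ℝ} (hf0 : ∀ z, 0 ≤ f z)
    (hfm : Measurable f) (hq : q = volume.withDensity fun z => ENNReal.ofReal (f z))
    (hent : Integrable (fun z => f z * |log (f z)|) volume)
    (hmom : Integrable (fun z => ‖z‖ ^ 2) q) (a : EuclideanSpace ℝ (Fin m)) {ε : ℝ} (hε : 0 < ε) :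
    klReal q (gaussianE a ε.toNNReal)
      = ∫ x, log (f x) ∂q + m / 2 * log (2 * π * ε) + (∫ x, ‖x - a‖ ^ 2 ∂q) / (2 * ε) := by
  have hv : ε.toNNReal ≠ 0 := (Real.toNNReal_pos.2 hε).ne'
  have hlogf : Integrable (fun x => log (f x)) q :=
    hq ▸ integrable_log_withDensity_ofReal hfm (ae_of_all _ hf0) hent
  rw [gaussianE_eq_withDensity a hv, Real.coe_toNNReal _ hε.le, hq,
    klReal_withDensity_ofReal hfm (by fun_prop : Continuous _).measurable
      (ae_of_all _ fun x => by positivity), ← hq]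
  have hrearrange : ∀ x, log (f x) - (-(m / 2 * log (2 * π * ε)) - ‖x - a‖ ^ 2 / (2 * ε))
      = log (f x) + (m / 2 * log (2 * π * ε) + ‖x - a‖ ^ 2 / (2 * ε)) := fun x => by ring
  simp_rw [log_gaussianDensity a _ hε, hrearrange]
  have hquad : Integrable (fun x => ‖x - a‖ ^ 2 / (2 * ε)) q :=
    (integrable_norm_sub_sq hmom a).div_const _
  have hrest : Integrable (fun x => m / 2 * log (2 * π * ε) + ‖x - a‖ ^ 2 / (2 * ε)) q :=
    (integrable_const _).add hquad
  rw [integral_add hlogf hrest, integral_add (integrable_const _) hquad,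
    integral_const, probReal_univ, one_smul, integral_div, add_assoc]

theorem sum_klReal_gaussianE {m : ℕ} {ι : Type*} [Fintype ι]
    {q : Measure (EuclideanSpace ℝ (Fin m))}
    [IsProbabilityMeasure q] {f : EuclideanSpace ℝ (Fin m) → ℝ} (hf0 : ∀ z, 0 ≤ f z)
    (hfm : Measurable f) (hq : q = volume.withDensity fun z => ENNReal.ofReal (f z))
    (hent : Integrable (fun z => f z * |log (f z)|) volume)
    (hmom : Integrable (fun z => ‖z‖ ^ 2) q) (z : ι → EuclideanSpace ℝ (Fin m)) {ε : ℝ}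
    (hε : 0 < ε) :
    ∑ i, klReal q (gaussianE (z i) ε.toNNReal)
      = Fintype.card ι * (∫ x, log (f x) ∂q + m / 2 * log (2 * π * ε))
        + (∑ i, ∫ x, ‖x - z i‖ ^ 2 ∂q) / (2 * ε) := by
  simp only [klReal_gaussianE hf0 hfm hq hent hmom _ hε, Finset.sum_add_distrib, Finset.sum_const,
    Finset.card_univ, nsmul_eq_mul, Finset.sum_div]
  ring

theorem tendsto_add_mul_log_add_div_mul_self (c k T : ℝ) {b : ℝ} (hb : b ≠ 0) :
    Tendsto (fun ε => (c + k * log (b * ε) + T / ε) * ε) (nhdsWithin 0 (Set.Ioi 0)) (nhds T) := by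
  have hcont : Continuous fun ε => c * ε + k / b * ((b * ε) * log (b * ε)) + T := by
    have := continuous_mul_log.comp (continuous_const_mul b)
    fun_prop
  have h := (hcont.tendsto 0).mono_left (nhdsWithin_le_nhds (s := Set.Ioi 0))
  simp only [mul_zero, zero_mul, zero_add] at h
  refine h.congr' ?_
  filter_upwards [self_mem_nhdsWithin] with ε (hε : 0 < ε)
  field_simp

theorem tendsto_add_mul_log_add_div_ratio (c c' k T T' : ℝ) {b : ℝ} (hb : b ≠ 0) (hT' : T' ≠ 0) :
    Tendsto (fun ε => (c + k * log (b * ε) + T / ε) / (c' + k * log (b * ε) + T' / ε))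
      (nhdsWithin 0 (Set.Ioi 0)) (nhds (T / T')) := by
  refine ((tendsto_add_mul_log_add_div_mul_self c k T hb).div
    (tendsto_add_mul_log_add_div_mul_self c' k T' hb) hT').congr' ?_
  filter_upwards [self_mem_nhdsWithin] with ε (hε : 0 < ε)
  exact mul_div_mul_right _ _ hε.ne'

/-- For probability measures `q, q'` on `ℝ^m` with Lebesgue densities of
finite entropy integral and finite second moments, and points `z_1, …, z_n` with
`Σ_i ∫ ‖z - z_i‖² ∂q' > 0`, the ratio of the summed KL divergences to the Gaussians
`N(z_i, εI)` converges, as `ε → 0⁺`, to the ratio of the summed expected squared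
distances. -/
theorem stmt_13 (m n : ℕ)
    (q q' : Measure (EuclideanSpace ℝ (Fin m)))
    [IsProbabilityMeasure q] [IsProbabilityMeasure q']
    (f f' : EuclideanSpace ℝ (Fin m) → ℝ)
    (hf0 : ∀ z, 0 ≤ f z) (hfm : Measurable f)
    (hf0' : ∀ z, 0 ≤ f' z) (hfm' : Measurable f')
    (hq : q = volume.withDensity (fun z => ENNReal.ofReal (f z)))
    (hq' : q' = volume.withDensity (fun z => ENNReal.ofReal (f' z)))
    (hent : Integrable (fun z => f z * |Real.log (f z)|) volume)
    (hent' : Integrable (fun z => f' z * |Real.log (f' z)|) volume)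
    (hmom : Integrable (fun z => ‖z‖ ^ 2) q)
    (hmom' : Integrable (fun z => ‖z‖ ^ 2) q')
    (z : Fin n → EuclideanSpace ℝ (Fin m))
    (hpos : 0 < ∑ i, ∫ x, ‖x - z i‖ ^ 2 ∂q') :
    Tendsto
      (fun ε : ℝ =>
        (∑ i, klReal q (gaussianE (z i) ε.toNNReal)) /
          (∑ i, klReal q' (gaussianE (z i) ε.toNNReal)))
      (nhdsWithin 0 (Set.Ioi 0))
      (nhds ((∑ i, ∫ x, ‖x - z i‖ ^ 2 ∂q) / (∑ i, ∫ x, ‖x - z i‖ ^ 2 ∂q'))) := by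
  have hratio := tendsto_add_mul_log_add_div_ratio (n * ∫ x, log (f x) ∂q)
    (n * ∫ x, log (f' x) ∂q') (n * m / 2) ((∑ i, ∫ x, ‖x - z i‖ ^ 2 ∂q) / 2)
    ((∑ i, ∫ x, ‖x - z i‖ ^ 2 ∂q') / 2) (by positivity : 2 * π ≠ 0) (by positivity)
  rw [div_div_div_cancel_right₀ two_ne_zero] at hratio
  refine hratio.congr' ?_
  filter_upwards [self_mem_nhdsWithin] with ε (hε : 0 < ε)
  rw [sum_klReal_gaussianE hf0 hfm hq hent hmom z hε,
    sum_klReal_gaussianE hf0' hfm' hq' hent' hmom' z hε, Fintype.card_fin]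
  congr 1 <;> ring
end
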